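/- arXiv:2112.10141 — 3 statements merged into one kernel-verified Lean document; each statement's English description precedes it below -/
import Mathlib

section
/- Let X be a CAT(0) cubical complex and let ĥ, k̂ be two hyperplanes whose distance in the contact graph CX is at least 3. Then ĥ and k̂ are strongly separated, i.e. they are parallel and no hyperplane of X is transverse to both. -/
/-!
A combinatorial model of a finite-dimensional CAT(0) cubical complex:
the vertex set `V` together with its collection of half-spaces `HS ⊆ Set V`,
axiomatized as a pocset of subsets of `V` whose dual (Sageev) complex has
vertex set exactly `V`.
-/

open Set

variable {V : Type*}

/-- Two half-spaces are transverse if all four corner intersections are nonempty. -/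
def Transverse (h k : Set V) : Prop :=
  (h ∩ k).Nonempty ∧ (hᶜ ∩ k).Nonempty ∧ (h ∩ kᶜ).Nonempty ∧ (hᶜ ∩ kᶜ).Nonempty

lemma Transverse.symm {h k : Set V} (t : Transverse h k) : Transverse k h := by
  obtain ⟨a, b, c, d⟩ := t
  refine ⟨?_, ?_, ?_, ?_⟩ <;> rw [Set.inter_comm] <;> assumption

/-- `h` and `k` bound the same hyperplane (they are equal or complementary). -/
def SameHyp (h k : Set V) : Prop := k = h ∨ k = hᶜ

lemma SameHyp.symm {h k : Set V} (s : SameHyp h k) : SameHyp k h := by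
  rcases s with rfl | rfl
  · exact Or.inl rfl
  · exact Or.inr (compl_compl h).symm

/-- A model of a finite-dimensional CAT(0) cubical complex with vertex set `V`. -/
structure CubicalCpx (V : Type*) where
  /-- the collection of half-spaces -/
  HS : Set (Set V)
  compl_mem : ∀ h ∈ HS, hᶜ ∈ HS
  proper : ∀ h ∈ HS, h.Nonempty ∧ hᶜ.Nonempty
  /-- finitely many hyperplanes separate two vertices -/
  finite_sep : ∀ x y : V, {h ∈ HS | x ∈ h ∧ y ∉ h}.Finite
  /-- distinct vertices are separated by a hyperplane -/
  sep : ∀ x y : V, x ≠ y → ∃ h ∈ HS, x ∈ h ∧ y ∉ h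
  /-- finite dimensionality: a bound on families of pairwise transverse hyperplanes -/
  dim : ℕ
  finite_dim : ∀ T : Finset (Set V), ↑T ⊆ HS →
    (∀ h ∈ T, ∀ k ∈ T, h ≠ k → Transverse h k) → T.card ≤ dim
  /-- every consistent total orientation satisfying the descending chain condition
  is the ultrafilter of half-spaces of an actual vertex (Sageev--Roller duality) -/
  realized : ∀ ω : Set (Set V), ω ⊆ HS →
    (∀ h ∈ HS, h ∈ ω ↔ hᶜ ∉ ω) →
    (∀ h ∈ ω, ∀ k ∈ ω, (h ∩ k).Nonempty) →
    (∀ f : ℕ → Set V, (∀ n, f n ∈ ω) → (∀ n, f (n + 1) ⊆ f n) → ∃ n, f (n + 1) = f n) →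
    ∃ x : V, ω = {h ∈ HS | x ∈ h}

namespace CubicalCpx

variable (C : CubicalCpx V)

/-- `h ⊊ k` tightly nested: no half-space of the complex lies properly between them. -/
def TightlyNested (h k : Set V) : Prop :=
  h ⊂ k ∧ ∀ l ∈ C.HS, h ⊆ l → l ⊆ k → l = h ∨ l = k

/-- tightly nested up to a choice of orientations of the two hyperplanes -/
def TightContact (h k : Set V) : Prop :=
  ∃ h' k', SameHyp h h' ∧ SameHyp k k' ∧ C.TightlyNested h' k'

/-- Two half-spaces (hyperplanes) are strongly separated if they are parallel
(not transverse) and no hyperplane of the complex is transverse to both. -/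
def StronglySeparated (h k : Set V) : Prop :=
  ¬ Transverse h k ∧ ∀ l ∈ C.HS, ¬ (Transverse l h ∧ Transverse l k)

/-- The contact graph: vertices are the hyperplanes of `X` (here represented by
their half-spaces, with both orientations of a hyperplane at graph distance `0`
from each other being excluded by `¬ SameHyp`), and two distinct hyperplanes are
adjacent iff they are transverse or tightly nested. -/
def contactGraph : SimpleGraph C.HS where
  Adj h k := ¬ SameHyp (h : Set V) k ∧
    (Transverse (h : Set V) k ∨ C.TightContact h k ∨ C.TightContact k h)
  symm := by
    constructor
    rintro a b ⟨ns, r⟩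
    refine ⟨fun s => ns s.symm, ?_⟩
    rcases r with t | tc | tc
    · exact Or.inl t.symm
    · exact Or.inr (Or.inr tc)
    · exact Or.inr (Or.inl tc)
  loopless := ⟨fun a ha => ha.1 (Or.inl rfl)⟩

/-- the combinatorial metric: the number of hyperplanes separating two vertices -/
noncomputable def dist (x y : V) : ℕ := {h ∈ C.HS | x ∈ h ∧ y ∉ h}.ncard

end CubicalCpx

lemma Transverse.not_sameHyp {h k : Set V} (t : Transverse h k) : ¬ SameHyp h k := by
  obtain ⟨hk, hck, -, -⟩ := t
  rintro (rfl | rfl)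
  · simp at hck
  · simp at hk

namespace CubicalCpx

variable (C : CubicalCpx V)

lemma contactGraph_adj_of_transverse {h k : C.HS} (t : Transverse (h : Set V) k) :
    C.contactGraph.Adj h k :=
  ⟨t.not_sameHyp, Or.inl t⟩

lemma contactGraph_edist_eq_one_of_transverse {h k : C.HS} (t : Transverse (h : Set V) k) :
    C.contactGraph.edist h k = 1 :=
  SimpleGraph.edist_eq_one_iff_adj.2 (C.contactGraph_adj_of_transverse t)

lemma contactGraph_edist_le_two_of_transverse_both {h k l : C.HS}
    (tlh : Transverse (l : Set V) h) (tlk : Transverse (l : Set V) k) :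
    C.contactGraph.edist h k ≤ 2 :=
  calc C.contactGraph.edist h k ≤ C.contactGraph.edist h l + C.contactGraph.edist l k :=
        C.contactGraph.edist_triangle
    _ = 2 := by
        rw [C.contactGraph_edist_eq_one_of_transverse tlh.symm,
          C.contactGraph_edist_eq_one_of_transverse tlk]
        rfl

end CubicalCpx

/-- If two hyperplanes of a CAT(0) cubical complex are at distance
at least `3` in the contact graph, then they are strongly separated. -/
theorem stmt0 (C : CubicalCpx V) (h k : C.HS)
    (hd : 3 ≤ C.contactGraph.edist h k) :
    C.StronglySeparated (h : Set V) (k : Set V) := by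
  refine ⟨fun t => ?_, fun l hl ⟨tlh, tlk⟩ => ?_⟩
  · have := hd.trans_eq (C.contactGraph_edist_eq_one_of_transverse t)
    norm_num at this
  · have := hd.trans (C.contactGraph_edist_le_two_of_transverse_both (l := ⟨l, hl⟩) tlh tlk)
    norm_num at this
end

section
/- Let g be an automorphism of a finite-dimensional CAT(0) cubical complex X and suppose there is a half-space h with g h ⊂ h and with h and g h strongly separated. Then d_CX(gⁿ ĥ, ĥ) ≥ n − 3 for all n ≥ 0; consequently the stable translation length of g on the contact graph CX is at least 1, so g acts loxodromically on CX. -/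
/-!
A combinatorial model of a finite-dimensional CAT(0) cubical complex:
the vertex set `V` together with its collection of half-spaces `HS ⊆ Set V`,
axiomatized as a pocset of subsets of `V` whose dual (Sageev) complex has
vertex set exactly `V`.
-/

open Set

variable {V : Type*}

/-!
The half-spaces `Hᵢ = gⁱ h` form a descending chain of pairwise strongly separated half-spaces.
Take a path in the contact graph from `Ĥₙ` to `Ĥ₀` and fix `0 < i < n`: the path starts at a
hyperplane lying in `Hᵢ` and ends at one lying in `Hᵢᶜ`, and two adjacent hyperplanes never lie on
opposite sides of `Ĥᵢ`, so some interior vertex of the path is transverse or equal to `Ĥᵢ`. By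
strong separation no vertex does this for two indices, hence the path has length at least `n`.

Nested half-spaces are joined by chains of tightly nested ones, so these distances are finite.
Every hyperplane is dual to an edge, which forces `g⁻¹` to preserve half-spaces as well; thus `g`
acts on the contact graph, `n ↦ d(gⁿ ĥ, ĥ)` is subadditive, and Fekete's lemma gives the limit.
-/

lemma SimpleGraph.edist_map_le {W W' : Type*} {G : SimpleGraph W} {G' : SimpleGraph W'}
    (φ : G →g G') (u v : W) : G'.edist (φ u) (φ v) ≤ G.edist u v := by
  rcases eq_or_ne (G.edist u v) ⊤ with h | h
  · simp [h]
  obtain ⟨p, hp⟩ := SimpleGraph.exists_walk_of_edist_ne_top h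
  rw [← hp, ← p.length_map φ]
  exact SimpleGraph.edist_le _

open Filter Topology in
lemma Subadditive.exists_tendsto_div_of_mul_le {u : ℕ → ℝ} (hu : Subadditive u) {c : ℝ}
    (hc : ∀ n : ℕ, c * n ≤ u n) : ∃ L, c ≤ L ∧ Tendsto (fun n => u n / n) atTop (𝓝 L) := by
  have hdiv : ∀ n : ℕ, 0 < n → c ≤ u n / n := fun n hn =>
    (le_div_iff₀ (Nat.cast_pos.2 hn)).2 (hc n)
  have hbdd : BddBelow (Set.range fun n : ℕ => u n / n) := ⟨min c 0, by
    rintro _ ⟨n, rfl⟩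
    rcases n.eq_zero_or_pos with rfl | hn
    · simp
    · exact (min_le_left _ _).trans (hdiv n hn)⟩
  exact ⟨hu.lim, ge_of_tendsto (hu.tendsto_lim hbdd) (eventually_gt_atTop 0 |>.mono hdiv),
    hu.tendsto_lim hbdd⟩

lemma Equiv.Perm.image_pow_add (f : Equiv.Perm V) (m n : ℕ) (s : Set V) :
    ⇑(f ^ (m + n)) '' s = ⇑(f ^ m) '' (⇑(f ^ n) '' s) := by
  rw [pow_add, Equiv.Perm.coe_mul, Set.image_comp]

/-- The hyperplane `ŵ` lies in the half-space `a`. -/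
def LiesIn (w a : Set V) : Prop := ∃ u, SameHyp w u ∧ u ⊂ a

lemma SameHyp.refl (a : Set V) : SameHyp a a := Or.inl rfl

lemma SameHyp.trans {a b c : Set V} (hab : SameHyp a b) (hbc : SameHyp b c) : SameHyp a c := by
  rcases hab with rfl | rfl <;> rcases hbc with rfl | rfl <;> simp [SameHyp]

lemma sameHyp_compl_left {a b : Set V} : SameHyp aᶜ b ↔ SameHyp a b := by
  unfold SameHyp
  rw [compl_compl, or_comm]

lemma SameHyp.image {W : Type*} (f : V ≃ W) {a b : Set V} (h : SameHyp a b) :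
    SameHyp (f '' a) (f '' b) := by
  rcases h with rfl | rfl
  · exact .refl _
  · exact Or.inr (f.image_compl a)

lemma sameHyp_image_iff {W : Type*} (f : V ≃ W) {a b : Set V} :
    SameHyp (f '' a) (f '' b) ↔ SameHyp a b :=
  ⟨fun h => by simpa using h.image f.symm, .image f⟩

lemma not_sameHyp_of_ssubset {a b : Set V} (ha : a.Nonempty) (hab : a ⊂ b) : ¬ SameHyp a b := by
  rintro (rfl | rfl)
  · exact hab.ne rfl
  · obtain ⟨x, hx⟩ := ha
    exact hab.subset hx hx

lemma transverse_image_iff {W : Type*} (f : V ≃ W) {a b : Set V} :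
    Transverse (f '' a) (f '' b) ↔ Transverse a b := by
  simp only [Transverse, ← f.image_compl, ← Set.image_inter f.injective, Set.image_nonempty]

lemma Transverse.of_sameHyp_right {a b b' : Set V} (h : Transverse a b) (hb : SameHyp b b') :
    Transverse a b' := by
  obtain ⟨h1, h2, h3, h4⟩ := h
  rcases hb with rfl | rfl
  · exact ⟨h1, h2, h3, h4⟩
  · exact ⟨h3, h4, by rwa [compl_compl], by rwa [compl_compl]⟩

lemma not_transverse_of_subset {a b : Set V} (hab : a ⊆ b) : ¬ Transverse a b := by
  rintro ⟨-, -, ⟨x, hxa, hxb⟩, -⟩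
  exact hxb (hab hxa)

lemma Transverse.of_subset_of_subset {l a b c : Set V} (hla : Transverse l a)
    (hlc : Transverse l c) (hcb : c ⊆ b) (hba : b ⊆ a) : Transverse l b :=
  ⟨hlc.1.mono (inter_subset_inter_right _ hcb), hlc.2.1.mono (inter_subset_inter_right _ hcb),
    hla.2.2.1.mono (inter_subset_inter_right _ (compl_subset_compl.2 hba)),
    hla.2.2.2.mono (inter_subset_inter_right _ (compl_subset_compl.2 hba))⟩

lemma transverse_or_sameHyp_or_liesIn (a w : Set V) :
    Transverse a w ∨ SameHyp a w ∨ LiesIn w a ∨ LiesIn w aᶜ := by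
  have key : ∀ {b u : Set V}, SameHyp w u → u ⊆ b → SameHyp b w ∨ LiesIn w b :=
    fun hu hub => hub.eq_or_ssubset.imp (fun h => (h ▸ hu).symm) (fun h => ⟨_, hu, h⟩)
  have hwc : SameHyp w wᶜ := Or.inr rfl
  by_cases h1 : w ⊆ a
  · have := key (.refl w) h1; tauto
  by_cases h2 : w ⊆ aᶜ
  · have := key (.refl w) h2; rw [sameHyp_compl_left] at this; tauto
  by_cases h3 : wᶜ ⊆ a
  · have := key hwc h3; tauto
  by_cases h4 : wᶜ ⊆ aᶜ
  · have := key hwc h4; rw [sameHyp_compl_left] at this; tauto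
  obtain ⟨x₁, hw₁, ha₁⟩ := Set.not_subset.1 h2
  obtain ⟨x₂, hw₂, ha₂⟩ := Set.not_subset.1 h1
  obtain ⟨x₃, hw₃, ha₃⟩ := Set.not_subset.1 h4
  obtain ⟨x₄, hw₄, ha₄⟩ := Set.not_subset.1 h3
  exact Or.inl ⟨⟨x₁, not_not.1 ha₁, hw₁⟩, ⟨x₂, ha₂, hw₂⟩, ⟨x₃, not_not.1 ha₃, hw₃⟩, ⟨x₄, ha₄, hw₄⟩⟩

section LiesIn

variable {C : CubicalCpx V}

lemma SameHyp.mem_HS {a b : Set V} (hab : SameHyp a b) (ha : a ∈ C.HS) : b ∈ C.HS := by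
  rcases hab with rfl | rfl
  exacts [ha, C.compl_mem a ha]

lemma LiesIn.not_liesIn_compl {w a : Set V} (hw : w ∈ C.HS) (h : LiesIn w a) :
    ¬ LiesIn w aᶜ := by
  rintro ⟨v, hwv, hva⟩
  obtain ⟨u, hwu, hua⟩ := h
  obtain ⟨x, hx⟩ := (C.proper u (hwu.mem_HS hw)).1
  rcases hwu.symm.trans hwv with h | h <;> rw [h] at hva
  · exact hva.subset hx (hua.subset hx)
  · exact hua.not_subset (compl_subset_compl.1 hva.subset)

lemma LiesIn.not_transverse {w w' a : Set V} (hw : LiesIn w a) (hw' : LiesIn w' aᶜ) :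
    ¬ Transverse w w' := by
  obtain ⟨u, hwu, hua⟩ := hw
  obtain ⟨v, hwv, hva⟩ := hw'
  intro h
  obtain ⟨x, hxu, hxv⟩ := ((h.of_sameHyp_right hwv).symm.of_sameHyp_right hwu).1
  exact hva.subset hxu (hua.subset hxv)

lemma LiesIn.not_tightContact {w w' a : Set V} (ha : a ∈ C.HS) (hw : w ∈ C.HS)
    (hw' : w' ∈ C.HS) (hwa : LiesIn w a) (hwa' : LiesIn w' aᶜ) : ¬ C.TightContact w w' := by
  obtain ⟨u, hwu, hua⟩ := hwa
  obtain ⟨v, hwv, hva⟩ := hwa'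
  obtain ⟨x, hxu⟩ := (C.proper u (hwu.mem_HS hw)).1
  obtain ⟨y, hyv⟩ := (C.proper v (hwv.mem_HS hw')).1
  rintro ⟨p, q, hwp, hwq, hpq, htight⟩
  rcases hwu.symm.trans hwp with rfl | rfl <;> rcases hwv.symm.trans hwq with rfl | rfl
  · exact hva.subset (hpq.subset hxu) (hua.subset hxu)
  · rcases htight a ha hua.subset (subset_compl_comm.1 hva.subset) with h | h
    exacts [hua.ne h.symm, hva.ne (compl_eq_comm.1 h.symm).symm]
  · exact hua.not_subset (compl_subset_compl.1 (hpq.subset.trans hva.subset))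
  · exact hva.subset hyv (hua.subset (compl_subset_compl.1 hpq.subset hyv))

lemma not_adj_of_liesIn {a : Set V} (ha : a ∈ C.HS) {w w' : C.HS} (hw : LiesIn (w : Set V) a)
    (hw' : LiesIn (w' : Set V) aᶜ) : ¬ C.contactGraph.Adj w w' := by
  rintro ⟨-, h | h | h⟩
  · exact hw.not_transverse hw' h
  · exact hw.not_tightContact ha w.2 w'.2 hw' h
  · exact hw'.not_tightContact (C.compl_mem a ha) w'.2 w.2 (by rwa [compl_compl]) h

end LiesIn

namespace CubicalCpx

variable {C : CubicalCpx V}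

lemma ne_compl_of_mem {s : Set V} (hs : s ∈ C.HS) : s ≠ sᶜ := by
  obtain ⟨x, hx⟩ := (C.proper s hs).1
  exact fun h => (h ▸ hx : x ∈ sᶜ) hx

lemma exists_succ_eq_of_forall_mem {f : ℕ → Set V} {x : V} (hf : ∀ n, f n ∈ C.HS)
    (hx : ∀ n, x ∈ f n) (hanti : ∀ n, f (n + 1) ⊆ f n) : ∃ n, f (n + 1) = f n := by
  have hanti' : Antitone f := antitone_nat_of_succ_le hanti
  obtain ⟨y, hy⟩ := (C.proper _ (hf 0)).2
  have hsep (n : ℕ) : f n ∈ {m ∈ C.HS | x ∈ m ∧ y ∉ m} :=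
    ⟨hf n, hx n, fun hyn => hy (hanti' n.zero_le hyn)⟩
  obtain ⟨a, b, hab, heq⟩ := (C.finite_sep x y).exists_lt_map_eq_of_forall_mem hsep
  exact ⟨a, (hanti a).antisymm (heq ▸ hanti' hab)⟩

def flipAt (C : CubicalCpx V) (x : V) (s : Set V) : Set (Set V) :=
  {m | m = sᶜ ∨ (m ∈ C.HS ∧ x ∈ m ∧ m ≠ s)}

section flipAt

variable {x : V} {s : Set V}

lemma flipAt_subset_HS (hs : s ∈ C.HS) : C.flipAt x s ⊆ C.HS := by
  rintro m (rfl | ⟨hm, -⟩)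
  exacts [C.compl_mem s hs, hm]

lemma mem_flipAt_iff_compl_notMem (hs : s ∈ C.HS) (hxs : x ∈ s) {m : Set V} (hm : m ∈ C.HS) :
    m ∈ C.flipAt x s ↔ mᶜ ∉ C.flipAt x s := by
  have hsc := ne_compl_of_mem hs
  by_cases h1 : m = s
  · subst h1
    simp [flipAt, hsc]
  by_cases h2 : m = sᶜ
  · subst h2
    simp [flipAt, hsc]
  have h1' : mᶜ ≠ sᶜ := fun h => h1 (compl_injective h)
  have h2' : mᶜ ≠ s := fun h => h2 (by rw [← h, compl_compl])
  simp [flipAt, h1, h2, h1', h2', hm, C.compl_mem m hm]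

lemma flipAt_inter_nonempty (hs : Minimal (fun m => m ∈ C.HS ∧ x ∈ m) s) {a b : Set V}
    (ha : a ∈ C.HS) (hb : b ∈ C.HS) : a ∈ C.flipAt x s → b ∈ C.flipAt x s → (a ∩ b).Nonempty := by
  have key : ∀ m ∈ C.HS, x ∈ m → m ≠ s → (m ∩ sᶜ).Nonempty := fun m hm hxm hms => by
    rw [← Set.sdiff_eq, Set.sdiff_nonempty]
    exact fun hsub => hms (le_antisymm hsub (hs.2 ⟨hm, hxm⟩ hsub))
  rintro (rfl | ⟨-, hxa, has⟩) (rfl | ⟨-, hxb, hbs⟩)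
  · simpa using (C.proper _ hs.1.1).2
  · exact Set.inter_comm _ _ ▸ key b hb hxb hbs
  · exact key a ha hxa has
  · exact ⟨x, hxa, hxb⟩

lemma exists_succ_eq_of_forall_mem_flipAt (hs : s ∈ C.HS) (hxs : x ∈ s) {f : ℕ → Set V}
    (hf : ∀ n, f n ∈ C.flipAt x s) (hanti : ∀ n, f (n + 1) ⊆ f n) : ∃ n, f (n + 1) = f n := by
  by_cases hx : ∀ n, x ∈ f n
  · exact exists_succ_eq_of_forall_mem (fun n => flipAt_subset_HS hs (hf n)) hx hanti
  obtain ⟨k, hk⟩ := not_forall.1 hx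
  have hfk : f k = sᶜ := (hf k).resolve_right fun h => hk h.2.1
  have hfk' : f (k + 1) = sᶜ := (hf (k + 1)).resolve_right fun h => (hfk ▸ hanti k h.2.1) hxs
  exact ⟨k, hfk'.trans hfk.symm⟩

lemma exists_separating_eq_singleton_of_minimal (hs : Minimal (fun m => m ∈ C.HS ∧ x ∈ m) s) :
    ∃ y, {m ∈ C.HS | x ∈ m ∧ y ∉ m} = {s} := by
  obtain ⟨hsHS, hxs⟩ := hs.1
  obtain ⟨y, hy⟩ := C.realized (C.flipAt x s) (flipAt_subset_HS hsHS)
    (fun m hm => mem_flipAt_iff_compl_notMem hsHS hxs hm)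
    (fun a ha b hb =>
      flipAt_inter_nonempty hs (flipAt_subset_HS hsHS ha) (flipAt_subset_HS hsHS hb) ha hb)
    (fun f hf hanti => exists_succ_eq_of_forall_mem_flipAt hsHS hxs hf hanti)
  have hmem : ∀ m ∈ C.HS, m ∈ C.flipAt x s ↔ y ∈ m := fun m hm => by
    rw [hy]; exact ⟨fun h => h.2, fun h => ⟨hm, h⟩⟩
  refine ⟨y, Set.eq_singleton_iff_unique_mem.2 ⟨⟨hsHS, hxs, fun hys => ?_⟩, ?_⟩⟩
  · rcases (hmem s hsHS).2 hys with h | h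
    exacts [ne_compl_of_mem hsHS h, h.2.2 rfl]
  · rintro m ⟨hm, hxm, hym⟩
    by_contra hms
    exact hym ((hmem m hm).1 (Or.inr ⟨hm, hxm, hms⟩))

end flipAt

lemma exists_minimal_subset {m : Set V} {x : V} (hm : m ∈ C.HS) (hxm : x ∈ m) :
    ∃ m₀ ⊆ m, Minimal (fun k => k ∈ C.HS ∧ x ∈ k) m₀ := by
  obtain ⟨w, hw⟩ := (C.proper m hm).2
  have hfin : {k | (k ∈ C.HS ∧ x ∈ k) ∧ k ⊆ m}.Finite :=
    (C.finite_sep x w).subset fun k ⟨⟨hk, hxk⟩, hkm⟩ => ⟨hk, hxk, fun hwk => hw (hkm hwk)⟩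
  obtain ⟨m₀, hm₀m, hmin⟩ := hfin.exists_le_minimal ⟨⟨hm, hxm⟩, subset_rfl⟩
  exact ⟨m₀, hm₀m, hmin.1.1, fun k hk hkm₀ => hmin.2 ⟨hk, hkm₀.trans hm₀m⟩ hkm₀⟩

/-- Flipping a hyperplane that lies inside `s` next to `x` would move `x` closer to `w`. -/
lemma minimal_of_minimalFor_dist {s : Set V} {x w : V} (hs : s ∈ C.HS) (hws : w ∉ s)
    (hx : MinimalFor (· ∈ s) (C.dist · w) x) : Minimal (fun m => m ∈ C.HS ∧ x ∈ m) s := by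
  refine ⟨⟨hs, hx.1⟩, fun m ⟨hm, hxm⟩ hms => ?_⟩
  by_contra hsm
  obtain ⟨m₀, hm₀m, hmin⟩ := exists_minimal_subset hm hxm
  obtain ⟨y, hy⟩ := exists_separating_eq_singleton_of_minimal hmin
  have hm₀ : m₀ ∈ {k ∈ C.HS | x ∈ k ∧ y ∉ k} := hy ▸ Set.mem_singleton m₀
  have hys : y ∈ s := by
    by_contra hys
    have : s ∈ {k ∈ C.HS | x ∈ k ∧ y ∉ k} := ⟨hs, hx.1, hys⟩
    rw [hy, Set.mem_singleton_iff] at this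
    exact hsm (this ▸ hm₀m)
  have hsub : {k ∈ C.HS | y ∈ k ∧ w ∉ k} ⊂ {k ∈ C.HS | x ∈ k ∧ w ∉ k} := by
    refine Set.ssubset_iff_exists.2 ⟨fun k ⟨hk, hyk, hwk⟩ => ⟨hk, ?_, hwk⟩,
      m₀, ⟨hm₀.1, hm₀.2.1, fun hw => hws (hms (hm₀m hw))⟩, fun h => hm₀.2.2 h.2.1⟩
    by_contra hxk
    have : kᶜ ∈ {k ∈ C.HS | x ∈ k ∧ y ∉ k} := ⟨C.compl_mem k hk, hxk, not_not.2 hyk⟩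
    rw [hy, Set.mem_singleton_iff] at this
    exact hws (hms (hm₀m (this ▸ hwk)))
  have hlt := Set.ncard_lt_ncard hsub (C.finite_sep x w)
  exact hlt.not_ge (hx.2 hys hlt.le)

lemma exists_separating_eq_singleton {s : Set V} (hs : s ∈ C.HS) :
    ∃ x y, {m ∈ C.HS | x ∈ m ∧ y ∉ m} = {s} := by
  obtain ⟨w, hw⟩ := (C.proper s hs).2
  obtain ⟨x, hx⟩ := exists_minimalFor_of_wellFoundedLT (· ∈ s) (C.dist · w) (C.proper s hs).1
  obtain ⟨y, hy⟩ := exists_separating_eq_singleton_of_minimal (minimal_of_minimalFor_dist hs hw hx)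
  exact ⟨x, y, hy⟩

lemma image_symm_mem (f : Equiv.Perm V) (hf : ∀ s ∈ C.HS, f '' s ∈ C.HS) {s : Set V}
    (hs : s ∈ C.HS) : f.symm '' s ∈ C.HS := by
  obtain ⟨x, y, hxy⟩ := exists_separating_eq_singleton hs
  have hsxy : s ∈ {m ∈ C.HS | x ∈ m ∧ y ∉ m} := hxy ▸ Set.mem_singleton s
  obtain ⟨m, hm, hxm, hym⟩ := C.sep (f.symm x) (f.symm y)
    (f.symm.injective.ne fun h => hsxy.2.2 (h ▸ hsxy.2.1))
  have hfm : f '' m ∈ {m ∈ C.HS | x ∈ m ∧ y ∉ m} := ⟨hf m hm, by simpa, by simpa⟩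
  rw [hxy, Set.mem_singleton_iff] at hfm
  rwa [← hfm, f.symm_image_image]

lemma StronglySeparated.not_transverse_or_sameHyp {a b w : Set V}
    (hab : C.StronglySeparated a b) (hne : ¬ SameHyp a b) (hw : w ∈ C.HS)
    (ha : Transverse a w ∨ SameHyp a w) : ¬ (Transverse b w ∨ SameHyp b w) := by
  rintro (hb | hb) <;> rcases ha with ha | ha
  · exact hab.2 w hw ⟨ha.symm, hb.symm⟩
  · exact hab.1 (hb.of_sameHyp_right ha.symm).symm
  · exact hab.1 (ha.of_sameHyp_right hb.symm)
  · exact hne (ha.trans hb.symm)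

lemma StronglySeparated.of_subset {a b c : Set V} (hba : C.StronglySeparated b a) (hcb : c ⊆ b)
    (hba' : b ⊆ a) : C.StronglySeparated c a :=
  ⟨not_transverse_of_subset (hcb.trans hba'),
    fun l hl ⟨hlc, hla⟩ => hba.2 l hl ⟨hla.of_subset_of_subset hlc hcb hba', hla⟩⟩

lemma exists_getVert_transverse_or_sameHyp {a : Set V} (ha : a ∈ C.HS) {s t : C.HS}
    (hs : LiesIn (s : Set V) a) (ht : LiesIn (t : Set V) aᶜ) (p : C.contactGraph.Walk s t) :
    ∃ k, 0 < k ∧ k < p.length ∧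
      (Transverse a (p.getVert k) ∨ SameHyp a (p.getVert k)) := by
  classical
  have hex : ∃ k, ¬ LiesIn (p.getVert k : Set V) a :=
    ⟨p.length, by rw [p.getVert_length]; exact fun h => h.not_liesIn_compl t.2 ht⟩
  set k := Nat.find hex
  have hk0 : 0 < k := (Nat.find_pos hex).2 (by rwa [not_not, p.getVert_zero])
  have hkle : k ≤ p.length := Nat.find_min' hex
    (by rw [p.getVert_length]; exact fun h => h.not_liesIn_compl t.2 ht)
  have hprev : LiesIn (p.getVert (k - 1) : Set V) a := not_not.1 (Nat.find_min hex (by omega))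
  have hadj : C.contactGraph.Adj (p.getVert (k - 1)) (p.getVert k) := by
    simpa [Nat.sub_add_cancel hk0] using p.adj_getVert_succ (i := k - 1) (by omega)
  have hnot : ¬ LiesIn (p.getVert k : Set V) aᶜ := fun h => not_adj_of_liesIn ha hprev h hadj
  have hklt : k < p.length := hkle.lt_of_ne fun h => hnot (by rwa [h, p.getVert_length])
  refine ⟨k, hk0, hklt, ?_⟩
  rcases transverse_or_sameHyp_or_liesIn a (p.getVert k) with h | h | h | h
  exacts [Or.inl h, Or.inr h, absurd h (Nat.find_spec hex), absurd h hnot]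

lemma le_edist_of_stronglySeparated {H : ℕ → Set V} (hH : ∀ i, H i ∈ C.HS)
    (hanti : StrictAnti H) (hsep : ∀ i j, i < j → C.StronglySeparated (H j) (H i)) (n : ℕ) :
    (n : ℕ∞) ≤ C.contactGraph.edist ⟨H n, hH n⟩ ⟨H 0, hH 0⟩ := by
  refine le_iInf fun p => Nat.cast_le.2 ?_
  have hcross : ∀ i ∈ Finset.Ioo 0 n, ∃ k ∈ Finset.Ioo 0 p.length,
      Transverse (H i) (p.getVert k) ∨ SameHyp (H i) (p.getVert k) := by
    intro i hi
    rw [Finset.mem_Ioo] at hi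
    obtain ⟨k, hk0, hk, hcr⟩ := exists_getVert_transverse_or_sameHyp (hH i)
      ⟨H n, .refl _, hanti hi.2⟩ ⟨(H 0)ᶜ, Or.inr rfl, compl_lt_compl_iff_lt.2 (hanti hi.1)⟩ p
    exact ⟨k, Finset.mem_Ioo.2 ⟨hk0, hk⟩, hcr⟩
  choose! κ hκ hcr using hcross
  have hinj : Set.InjOn κ (Finset.Ioo 0 n) := by
    intro i hi j hj hij
    by_contra hne
    wlog hlt : i < j generalizing i j
    · exact this hj hi hij.symm (Ne.symm hne) (lt_of_le_of_ne (not_lt.1 hlt) (Ne.symm hne))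
    have hne' : ¬ SameHyp (H j) (H i) :=
      not_sameHyp_of_ssubset (C.proper _ (hH j)).1 (hanti hlt)
    exact (hsep i j hlt).not_transverse_or_sameHyp hne' (p.getVert _).2 (hcr j hj)
      (hij ▸ hcr i hi)
  have := Finset.card_le_card_of_injOn κ hκ hinj
  simp only [Nat.card_Ioo] at this
  rcases n.eq_zero_or_pos with rfl | hn
  · exact Nat.zero_le _
  have : 0 < p.length := Nat.pos_of_ne_zero fun h =>
    (hanti hn).ne (congrArg Subtype.val (p.eq_of_length_eq_zero h))
  omega

section image

variable (f : Equiv.Perm V)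

lemma StronglySeparated.image (hf : ∀ s ∈ C.HS, f '' s ∈ C.HS) {a b : Set V}
    (hab : C.StronglySeparated a b) : C.StronglySeparated (f '' a) (f '' b) := by
  refine ⟨(transverse_image_iff f).not.2 hab.1, fun l hl ⟨hla, hlb⟩ => ?_⟩
  rw [← f.image_symm_image l, transverse_image_iff] at hla hlb
  exact hab.2 _ (image_symm_mem f hf hl) ⟨hla, hlb⟩

lemma TightlyNested.image (hf : ∀ s ∈ C.HS, f '' s ∈ C.HS) {a b : Set V}
    (hab : C.TightlyNested a b) : C.TightlyNested (f '' a) (f '' b) := by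
  refine ⟨f.injective.image_strictMono hab.1, fun l hl hal hlb => ?_⟩
  rw [← f.subset_symm_image] at hal
  rw [← f.symm_image_subset] at hlb
  refine (hab.2 _ (image_symm_mem f hf hl) hal hlb).imp ?_ ?_ <;>
    exact fun h => by rw [← h, f.image_symm_image]

lemma TightContact.image (hf : ∀ s ∈ C.HS, f '' s ∈ C.HS) {a b : Set V}
    (hab : C.TightContact a b) : C.TightContact (f '' a) (f '' b) := by
  obtain ⟨a', b', ha, hb, h⟩ := hab
  exact ⟨f '' a', f '' b', ha.image f, hb.image f, h.image f hf⟩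

def imageHom (hf : ∀ s ∈ C.HS, f '' s ∈ C.HS) : C.contactGraph →g C.contactGraph where
  toFun s := ⟨f '' s, hf s s.2⟩
  map_rel' := fun ⟨hne, h⟩ => ⟨(sameHyp_image_iff f).not.2 hne,
    h.imp (transverse_image_iff f).2 (Or.imp (·.image f hf) (·.image f hf))⟩

lemma image_pow_mem (hf : ∀ s ∈ C.HS, f '' s ∈ C.HS) (n : ℕ) :
    ∀ s ∈ C.HS, ⇑(f ^ n) '' s ∈ C.HS := by
  induction n with
  | zero => simp
  | succ n ih => exact fun s hs => by rw [f.image_pow_add, pow_one]; exact ih _ (hf s hs)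

end image

lemma edist_image_pow_add_le {f : Equiv.Perm V} (hf : ∀ s ∈ C.HS, f '' s ∈ C.HS) {h : Set V}
    (hh : h ∈ C.HS) (m n : ℕ) :
    C.contactGraph.edist ⟨⇑(f ^ (m + n)) '' h, image_pow_mem f hf _ h hh⟩ ⟨h, hh⟩ ≤
      C.contactGraph.edist ⟨⇑(f ^ m) '' h, image_pow_mem f hf _ h hh⟩ ⟨h, hh⟩ +
      C.contactGraph.edist ⟨⇑(f ^ n) '' h, image_pow_mem f hf _ h hh⟩ ⟨h, hh⟩ := by
  have hshift := SimpleGraph.edist_map_le (C.imageHom (f ^ m) (image_pow_mem f hf m))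
    ⟨⇑(f ^ n) '' h, image_pow_mem f hf _ h hh⟩ ⟨h, hh⟩
  have hmn : C.imageHom (f ^ m) (image_pow_mem f hf m)
      ⟨⇑(f ^ n) '' h, image_pow_mem f hf _ h hh⟩ =
        ⟨⇑(f ^ (m + n)) '' h, image_pow_mem f hf _ h hh⟩ :=
    Subtype.ext (f.image_pow_add m n h).symm
  rw [hmn] at hshift
  calc _ ≤ _ := C.contactGraph.edist_triangle
    _ ≤ _ := add_le_add_left hshift _
    _ = _ := add_comm _ _

lemma adj_of_tightlyNested {a b : Set V} (ha : a ∈ C.HS) (hb : b ∈ C.HS)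
    (hab : C.TightlyNested a b) : C.contactGraph.Adj ⟨a, ha⟩ ⟨b, hb⟩ :=
  ⟨not_sameHyp_of_ssubset (C.proper a ha).1 hab.1, Or.inr (Or.inl ⟨a, b, .refl a, .refl b, hab⟩)⟩

lemma reachable_of_ssubset {a b : Set V} (ha : a ∈ C.HS) (hb : b ∈ C.HS) (hab : a ⊂ b) :
    C.contactGraph.Reachable ⟨a, ha⟩ ⟨b, hb⟩ := by
  induction hN : {l ∈ C.HS | a ⊂ l ∧ l ⊂ b}.ncard using Nat.strong_induction_on
    generalizing a b with
  | _ N ih =>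
  by_cases hbetween : ∃ l ∈ C.HS, a ⊂ l ∧ l ⊂ b
  · obtain ⟨l, hl, hal, hlb⟩ := hbetween
    obtain ⟨x, hx⟩ := (C.proper a ha).1
    obtain ⟨y, hy⟩ := (C.proper b hb).2
    have hfin : {k ∈ C.HS | a ⊂ k ∧ k ⊂ b}.Finite := (C.finite_sep x y).subset
      fun k ⟨hk, hak, hkb⟩ => ⟨hk, hak.subset hx, fun h => hy (hkb.subset h)⟩
    have hlt : ∀ {c d : Set V}, a ⊆ c → d ⊆ b → l ∉ {k ∈ C.HS | c ⊂ k ∧ k ⊂ d} →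
        {k ∈ C.HS | c ⊂ k ∧ k ⊂ d}.ncard < N := fun hac hdb hl' =>
      hN ▸ Set.ncard_lt_ncard (Set.ssubset_iff_exists.2 ⟨fun k ⟨hk, hck, hkd⟩ =>
        ⟨hk, hac.trans_ssubset hck, hkd.trans_subset hdb⟩, l, ⟨hl, hal, hlb⟩, hl'⟩) hfin
    exact (ih _ (hlt subset_rfl hlb.subset fun h => h.2.2.ne rfl) ha hl hal rfl).trans
      (ih _ (hlt hal.subset subset_rfl fun h => h.2.1.ne rfl) hl hb hlb rfl)
  · refine (adj_of_tightlyNested ha hb ⟨hab, fun l hl hal hlb => ?_⟩).reachable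
    by_contra h
    push Not at h
    exact hbetween ⟨l, hl, hal.ssubset_of_ne h.1.symm, hlb.ssubset_of_ne h.2⟩

lemma strictAnti_image_pow {f : Equiv.Perm V} {h : Set V} (hsub : f '' h ⊂ h) :
    StrictAnti fun n : ℕ => ⇑(f ^ n) '' h :=
  strictAnti_nat_of_succ_lt fun n => by
    rw [f.image_pow_add, pow_one]
    exact (f ^ n).injective.image_strictMono hsub

lemma stronglySeparated_image_pow {f : Equiv.Perm V} (hf : ∀ s ∈ C.HS, f '' s ∈ C.HS)
    {h : Set V} (hsub : f '' h ⊂ h) (hss : C.StronglySeparated (f '' h) h) {i j : ℕ}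
    (hij : i < j) : C.StronglySeparated (⇑(f ^ j) '' h) (⇑(f ^ i) '' h) := by
  have hanti := (strictAnti_image_pow hsub).antitone
  have hstep : C.StronglySeparated (⇑(f ^ (i + 1)) '' h) (⇑(f ^ i) '' h) := by
    rw [f.image_pow_add, pow_one]
    exact hss.image (f ^ i) (image_pow_mem f hf i)
  exact hstep.of_subset (hanti hij) (hanti i.le_succ)

end CubicalCpx

open Filter in
/-- If `g` is an automorphism of `X` and `h` is a half-space
with `g h ⊂ h` strongly separated from `h`, then `d_CX(gⁿ ĥ, ĥ) ≥ n - 3` for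
all `n`, and consequently the stable translation length of `g` on the contact
graph exists and is at least `1`, so `g` is loxodromic on the contact graph. -/
theorem stmt6 (C : CubicalCpx V) (g : Equiv.Perm V)
    (hHS : ∀ s ∈ C.HS, ⇑g '' s ∈ C.HS)
    (h : Set V) (hh : h ∈ C.HS)
    (hpow : ∀ n : ℕ, ⇑(g ^ n) '' h ∈ C.HS)
    (hsub : ⇑g '' h ⊂ h)
    (hss : C.StronglySeparated (⇑g '' h) h) :
    (∀ n : ℕ, (n : ℕ∞) ≤
        C.contactGraph.edist ⟨⇑(g ^ n) '' h, hpow n⟩ ⟨h, hh⟩ + 3) ∧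
    ∃ L : ℝ, 1 ≤ L ∧
      Tendsto (fun n : ℕ =>
          ((C.contactGraph.edist ⟨⇑(g ^ n) '' h, hpow n⟩ ⟨h, hh⟩).toNat : ℝ) / n)
        atTop (nhds L) := by
  have hanti := CubicalCpx.strictAnti_image_pow hsub
  have h0 : (⟨⇑(g ^ 0) '' h, hpow 0⟩ : C.HS) = ⟨h, hh⟩ := Subtype.ext (by simp)
  have hlow (n : ℕ) : (n : ℕ∞) ≤ C.contactGraph.edist ⟨⇑(g ^ n) '' h, hpow n⟩ ⟨h, hh⟩ :=
    h0 ▸ CubicalCpx.le_edist_of_stronglySeparated hpow hanti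
      (fun _ _ => CubicalCpx.stronglySeparated_image_pow hHS hsub hss) n
  have hfin (n : ℕ) : C.contactGraph.edist ⟨⇑(g ^ n) '' h, hpow n⟩ ⟨h, hh⟩ ≠ ⊤ := by
    rw [SimpleGraph.edist_ne_top_iff_reachable, ← h0]
    rcases n.eq_zero_or_pos with rfl | hn
    · rfl
    · exact CubicalCpx.reachable_of_ssubset _ _ (hanti hn)
  have hsubadd : Subadditive fun n : ℕ =>
      ((C.contactGraph.edist ⟨⇑(g ^ n) '' h, hpow n⟩ ⟨h, hh⟩).toNat : ℝ) := fun m n => by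
    have := ENat.toNat_le_toNat (CubicalCpx.edist_image_pow_add_le hHS hh m n)
      (WithTop.add_ne_top.2 ⟨hfin m, hfin n⟩)
    rw [ENat.toNat_add (hfin m) (hfin n)] at this
    exact (Nat.cast_le.2 this).trans_eq (Nat.cast_add _ _)
  refine ⟨fun n => (hlow n).trans le_self_add, hsubadd.exists_tendsto_div_of_mul_le fun n => ?_⟩
  simpa using ENat.toNat_le_toNat (hlow n) (hfin n)
end

section
/- (Median box lemma) Let X be a finite-dimensional CAT(0) cubical complex with Roller compactification X̄ and median map m. Fix o ∈ X and x, y, z ∈ X̄, and set m₁ = m(o,z,y), m₂ = m(o,z,x), m₃ = m(o,m₁,m₂), m₄ = m(o,x,y). Suppose there is a pair of strongly separated half-spaces h₁ ⊂ h₂ with z, m₂ ∈ h₁ and o, m₃ ∈ h₂*. Then m₁ = m₃ = m₄. -/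
/-!
As `h₁ ∩ h₂ᶜ = ∅` and `o ∈ h₂ᶜ`, the hypothesis `m₂ ∈ h₁` forces `x ∈ h₁`; then `x, z ∉ h₂ᶜ`, so
`m₃ ∈ h₂ᶜ` forces `y ∈ h₂ᶜ`. A half-space separating `x` from `z` and `o` from `y` would therefore cut both
`h₁` and `h₂ᶜ`, i.e. be transverse to both `h₁` and `h₂`, which strong separation forbids. So on
every half-space `x` agrees with `z` or `o` agrees with `y`, and in either case the three medians
agree there.
-/

/-!
The Roller compactification of a CAT(0) cubical complex, modeled via
ultrafilters on the pocset of half-spaces (subsets of the vertex set `V`).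
-/

open Set

variable {V : Type*}

def StronglySeparated (𝓗 : Set (Set V)) (h k : Set V) : Prop :=
  ¬ Transverse h k ∧ ∀ l ∈ 𝓗, ¬ (Transverse l h ∧ Transverse l k)

/-- A point of the Roller compactification: a consistent total ultrafilter on
the half-space collection `𝓗`. -/
def IsPoint (𝓗 : Set (Set V)) (U : Set (Set V)) : Prop :=
  U ⊆ 𝓗 ∧ (∀ h ∈ 𝓗, h ∈ U ↔ hᶜ ∉ U) ∧ ∀ h ∈ U, ∀ k ∈ U, (h ∩ k).Nonempty

/-- the median of three points of the Roller compactification, given by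
`U_{m(a,b,c)} = (U_a ∩ U_b) ∪ (U_b ∩ U_c) ∪ (U_c ∩ U_a)` -/
def med (A B C : Set (Set V)) : Set (Set V) := (A ∩ B) ∪ (B ∩ C) ∪ (C ∩ A)

section Median

variable {o x y z : Set (Set V)}

theorem med_med_med_eq_med_left (h : ∀ k, ¬(Xor (k ∈ x) (k ∈ z) ∧ Xor (k ∈ o) (k ∈ y))) :
    med o (med o z y) (med o z x) = med o z y := by
  ext k
  have hk := h k
  simp only [med, mem_union, mem_inter_iff, Xor] at hk ⊢
  tauto

theorem med_med_med_eq_med_right (h : ∀ k, ¬(Xor (k ∈ x) (k ∈ z) ∧ Xor (k ∈ o) (k ∈ y))) :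
    med o (med o z y) (med o z x) = med o x y := by
  ext k
  have hk := h k
  simp only [med, mem_union, mem_inter_iff, Xor] at hk ⊢
  tauto

end Median

namespace IsPoint

variable {𝓗 U W : Set (Set V)} {h k : Set V}

theorem notMem_of_disjoint (hU : IsPoint 𝓗 U) (hh : h ∈ U) (hhk : Disjoint h k) : k ∉ U :=
  fun hk => (hU.2.2 h hh k hk).ne_empty hhk.inter_eq

theorem compl_mem_of_notMem (hU : IsPoint 𝓗 U) (hk : k ∈ 𝓗) (hkU : k ∉ U) : kᶜ ∈ U :=
  not_not.1 (mt (hU.2.1 k hk).2 hkU)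

theorem inter_nonempty_of_xor (hU : IsPoint 𝓗 U) (hW : IsPoint 𝓗 W)
    (hkUW : Xor (k ∈ U) (k ∈ W)) (hhU : h ∈ U) (hhW : h ∈ W) :
    (k ∩ h).Nonempty ∧ (kᶜ ∩ h).Nonempty := by
  rcases hkUW with ⟨hkU, hkW⟩ | ⟨hkW, hkU⟩
  · exact ⟨hU.2.2 k hkU h hhU, hW.2.2 _ (hW.compl_mem_of_notMem (hU.1 hkU) hkW) h hhW⟩
  · exact ⟨hW.2.2 k hkW h hhW, hU.2.2 _ (hU.compl_mem_of_notMem (hW.1 hkW) hkU) h hhU⟩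

end IsPoint

theorem transverse_and_transverse_of_subset {k h₁ h₂ : Set V} (h₁₂ : h₁ ⊆ h₂)
    (hk₁ : (k ∩ h₁).Nonempty ∧ (kᶜ ∩ h₁).Nonempty)
    (hk₂ : (k ∩ h₂ᶜ).Nonempty ∧ (kᶜ ∩ h₂ᶜ).Nonempty) :
    Transverse k h₁ ∧ Transverse k h₂ := by
  have h₂₁ : h₂ᶜ ⊆ h₁ᶜ := compl_subset_compl.2 h₁₂
  exact ⟨⟨hk₁.1, hk₁.2, hk₂.1.mono (inter_subset_inter_right _ h₂₁),
      hk₂.2.mono (inter_subset_inter_right _ h₂₁)⟩,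
    ⟨hk₁.1.mono (inter_subset_inter_right _ h₁₂), hk₁.2.mono (inter_subset_inter_right _ h₁₂),
      hk₂.1, hk₂.2⟩⟩

theorem not_xor_and_xor_of_stronglySeparated {𝓗 o x y z : Set (Set V)} {h₁ h₂ : Set V}
    (ho : IsPoint 𝓗 o) (hx : IsPoint 𝓗 x) (hy : IsPoint 𝓗 y) (hz : IsPoint 𝓗 z)
    (h₁₂ : h₁ ⊆ h₂) (hss : StronglySeparated 𝓗 h₁ h₂)
    (h₁x : h₁ ∈ x) (h₁z : h₁ ∈ z) (h₂o : h₂ᶜ ∈ o) (h₂y : h₂ᶜ ∈ y) :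
    ∀ k, ¬(Xor (k ∈ x) (k ∈ z) ∧ Xor (k ∈ o) (k ∈ y)) := by
  rintro k ⟨hxz, hoy⟩
  have hk : k ∈ 𝓗 := hxz.or.elim (fun hkx => hx.1 hkx) (fun hkz => hz.1 hkz)
  exact hss.2 k hk <| transverse_and_transverse_of_subset h₁₂
    (hx.inter_nonempty_of_xor hz hxz h₁x h₁z) (ho.inter_nonempty_of_xor hy hoy h₂o h₂y)

theorem stmt8_general (𝓗 : Set (Set V))
    (Uo Ux Uy Uz : Set (Set V))
    (ho : IsPoint 𝓗 Uo) (hx : IsPoint 𝓗 Ux) (hy : IsPoint 𝓗 Uy)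
    (hz : IsPoint 𝓗 Uz)
    (h₁ h₂ : Set V) (h₁₂ : h₁ ⊂ h₂)
    (hss : StronglySeparated 𝓗 h₁ h₂)
    (hz₁ : h₁ ∈ Uz) (hm₂ : h₁ ∈ med Uo Uz Ux)
    (ho₂ : h₂ᶜ ∈ Uo) (hm₃ : h₂ᶜ ∈ med Uo (med Uo Uz Uy) (med Uo Uz Ux)) :
    med Uo Uz Uy = med Uo (med Uo Uz Uy) (med Uo Uz Ux) ∧
    med Uo (med Uo Uz Uy) (med Uo Uz Ux) = med Uo Ux Uy := by
  have hdisj : Disjoint h₁ h₂ᶜ := disjoint_compl_right_iff_subset.2 h₁₂.1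
  have h₁o : h₁ ∉ Uo := ho.notMem_of_disjoint ho₂ hdisj.symm
  have h₁x : h₁ ∈ Ux := by
    simp only [med, mem_union, mem_inter_iff] at hm₂
    tauto
  have h₂z : h₂ᶜ ∉ Uz := hz.notMem_of_disjoint hz₁ hdisj
  have h₂x : h₂ᶜ ∉ Ux := hx.notMem_of_disjoint h₁x hdisj
  have h₂y : h₂ᶜ ∈ Uy := by
    simp only [med, mem_union, mem_inter_iff] at hm₃
    tauto
  have hsep := not_xor_and_xor_of_stronglySeparated ho hx hy hz h₁₂.1 hss h₁x hz₁ ho₂ h₂y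
  exact ⟨(med_med_med_eq_med_left hsep).symm, med_med_med_eq_med_right hsep⟩

/-- median box lemma.  Fix points `o, x, y, z` of the Roller
compactification, and set `m₁ = m(o,z,y)`, `m₂ = m(o,z,x)`, `m₃ = m(o,m₁,m₂)`,
`m₄ = m(o,x,y)`.  If there is a pair of strongly separated half-spaces
`h₁ ⊂ h₂` with `z, m₂ ∈ h₁` and `o, m₃ ∈ h₂ᶜ`, then `m₁ = m₃ = m₄`. -/
theorem stmt8 (𝓗 : Set (Set V)) (hcompl : ∀ h ∈ 𝓗, hᶜ ∈ 𝓗)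
    (Uo Ux Uy Uz : Set (Set V))
    (ho : IsPoint 𝓗 Uo) (hx : IsPoint 𝓗 Ux) (hy : IsPoint 𝓗 Uy)
    (hz : IsPoint 𝓗 Uz)
    (h₁ h₂ : Set V) (h₁m : h₁ ∈ 𝓗) (h₂m : h₂ ∈ 𝓗) (h₁₂ : h₁ ⊂ h₂)
    (hss : StronglySeparated 𝓗 h₁ h₂)
    (hz₁ : h₁ ∈ Uz) (hm₂ : h₁ ∈ med Uo Uz Ux)
    (ho₂ : h₂ᶜ ∈ Uo) (hm₃ : h₂ᶜ ∈ med Uo (med Uo Uz Uy) (med Uo Uz Ux)) :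
    med Uo Uz Uy = med Uo (med Uo Uz Uy) (med Uo Uz Ux) ∧
    med Uo (med Uo Uz Uy) (med Uo Uz Ux) = med Uo Ux Uy :=
  stmt8_general 𝓗 Uo Ux Uy Uz ho hx hy hz h₁ h₂ h₁₂ hss hz₁ hm₂ ho₂ hm₃
end
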